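/- arXiv:1506.08693 — 3 statements merged into one kernel-verified Lean document; each statement's English description precedes it below -/
import Mathlib

section
/- Every connected unipotent subgroup of O(1,n-1) fixes a nonzero isotropic vector: if u' is a Lie subalgebra of o(1,n-1) consisting of nilpotent matrices, then there exists a nonzero vector v ∈ R^{1,n-1} with q(v) = 0 and X(v) = 0 for all X ∈ u'. -/
/-!
Let `E` be the common kernel of `u'`. If `E` is everything, any nonzero isotropic vector of the
Lorentzian form will do. Otherwise `E^⊥` is a nonzero subspace, invariant under `u'` because `u'`
is skew. By Engel's theorem the nilpotent Lie algebra `u'` kills a nonzero vector `v ∈ E^⊥`; then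
`v ∈ E ∩ E^⊥`, so `v` is isotropic.
-/

def minkB (n : ℕ) (v w : Fin n → ℝ) : ℝ :=
  ∑ i : Fin n, (if (i : ℕ) = 0 then (-1 : ℝ) else 1) * v i * w i

attribute [local instance 100] LieRing.ofAssociativeRing

namespace LieModule

variable {K L M : Type*} [Field K] [LieRing L] [LieAlgebra K L]
  [AddCommGroup M] [Module K M] [LieRingModule L M] [LieModule K L M] [IsNilpotent L M]

theorem exists_mem_ne_zero_mem_maxTrivSubmodule {N : LieSubmodule K L M} (hN : N ≠ ⊥) :
    ∃ m ∈ N, m ≠ 0 ∧ m ∈ maxTrivSubmodule K L M := by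
  have : IsNilpotent L (⊤ : LieSubmodule K L M) := (isNilpotent_of_top_iff' (R := K)).mpr ‹_›
  have : IsNilpotent L N := isNilpotent_of_le K L M N ⊤ le_top
  have : Nontrivial N := (LieSubmodule.nontrivial_iff_ne_bot K L M).mpr hN
  have := nontrivial_max_triv_of_isNilpotent K L N
  obtain ⟨m, hm⟩ := exists_ne (0 : maxTrivSubmodule K L N)
  refine ⟨m.1, m.1.2, fun h => hm (by ext; exact h), fun x => ?_⟩
  simpa using congrArg Subtype.val (m.2 x)

theorem exists_mem_maxTrivSubmodule_ne_zero_apply_self_eq_zero [FiniteDimensional K M]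
    {Φ : LinearMap.BilinForm K M} (hΦ : Φ.Nondegenerate) (hinv : Φ.lieInvariant L)
    (htop : maxTrivSubmodule K L M ≠ ⊤) :
    ∃ v ∈ maxTrivSubmodule K L M, v ≠ 0 ∧ Φ v v = 0 := by
  set E := maxTrivSubmodule K L M
  have hperp : LieAlgebra.InvariantForm.orthogonal Φ hinv E ≠ ⊥ := by
    rw [Ne, ← LieSubmodule.toSubmodule_eq_bot, LieAlgebra.InvariantForm.orthogonal_toSubmodule,
      ← Submodule.finrank_eq_zero, LinearMap.BilinForm.finrank_orthogonal hΦ]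
    have := Submodule.finrank_lt ((LieSubmodule.toSubmodule_eq_top E).not.mpr htop)
    omega
  obtain ⟨v, hvperp, hv0, hvE⟩ := exists_mem_ne_zero_mem_maxTrivSubmodule hperp
  exact ⟨v, hvE, hv0, (LieAlgebra.InvariantForm.mem_orthogonal _ _ _ _).mp hvperp v hvE⟩

end LieModule

namespace LieSubalgebra

variable {K V : Type*} [CommRing K] [AddCommGroup V] [Module K V]
  {u : LieSubalgebra K (Module.End K V)}

theorem mem_maxTrivSubmodule_iff {v : V} :
    v ∈ LieModule.maxTrivSubmodule K u V ↔ ∀ X ∈ u, X v = 0 := by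
  simp [LieModule.mem_maxTrivSubmodule]

theorem lieModule_isNilpotent [IsNoetherian K V] (h : ∀ X ∈ u, IsNilpotent X) :
    LieModule.IsNilpotent u V :=
  (LieModule.isNilpotent_iff_forall' (R := K)).mpr fun X => by
    simpa [LieSubalgebra.toEnd_eq] using h X X.2

theorem lieInvariant_of_forall_add_eq_zero {Φ : LinearMap.BilinForm K V}
    (h : ∀ X ∈ u, ∀ v w, Φ (X v) w + Φ v (X w) = 0) : Φ.lieInvariant u :=
  fun X v w => by simpa [eq_neg_iff_add_eq_zero] using h X X.2 v w

end LieSubalgebra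

noncomputable def minkowskiForm (n : ℕ) : LinearMap.BilinForm ℝ (Fin n → ℝ) :=
  Matrix.toBilin' (Matrix.diagonal fun i : Fin n => if (i : ℕ) = 0 then -1 else 1)

theorem minkowskiForm_apply (n : ℕ) (v w : Fin n → ℝ) : minkowskiForm n v w = minkB n v w := by
  simp [minkowskiForm, Matrix.toBilin'_apply, minkB, Matrix.diagonal_apply]

theorem minkowskiForm_nondegenerate (n : ℕ) : (minkowskiForm n).Nondegenerate :=
  LinearMap.BilinForm.nondegenerate_toBilin'_of_det_ne_zero' _ <| by
    simp only [Matrix.det_diagonal, Finset.prod_ne_zero_iff]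
    intro i _
    split_ifs <;> norm_num

theorem exists_ne_zero_minkB_self_eq_zero {n : ℕ} (hn : 2 ≤ n) :
    ∃ v : Fin n → ℝ, v ≠ 0 ∧ minkB n v v = 0 := by
  obtain ⟨m, rfl⟩ : ∃ m, n = m + 2 := ⟨n - 2, by omega⟩
  refine ⟨fun i => if (i : ℕ) ≤ 1 then 1 else 0, fun h => by simpa using congrFun h 0, ?_⟩
  simp [minkB, Fin.sum_univ_succ]

/-- Every connected unipotent subgroup of `O(1,n-1)` fixes a nonzero isotropic vector:
if `u'` is a Lie subalgebra of `o(1,n-1)` (linear maps skew-symmetric for the Lorentzian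
form) all of whose elements are nilpotent endomorphisms, then there is a nonzero vector
`v` with `q(v) = 0` annihilated by every element of `u'`. -/
theorem unipotent_subalgebra_fixes_isotropic_vector (n : ℕ) (hn : 2 ≤ n)
    (u' : LieSubalgebra ℝ (Module.End ℝ (Fin n → ℝ)))
    (hskew : ∀ X ∈ u', ∀ v w : Fin n → ℝ, minkB n (X v) w + minkB n v (X w) = 0)
    (hnil : ∀ X ∈ u', IsNilpotent X) :
    ∃ v : Fin n → ℝ, v ≠ 0 ∧ minkB n v v = 0 ∧ ∀ X ∈ u', X v = 0 := by
  have : LieModule.IsNilpotent u' (Fin n → ℝ) := LieSubalgebra.lieModule_isNilpotent hnil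
  have hinv : (minkowskiForm n).lieInvariant u' :=
    LieSubalgebra.lieInvariant_of_forall_add_eq_zero (by simpa only [minkowskiForm_apply])
  by_cases htop : LieModule.maxTrivSubmodule ℝ u' (Fin n → ℝ) = ⊤
  · obtain ⟨v, hv0, hvv⟩ := exists_ne_zero_minkB_self_eq_zero hn
    exact ⟨v, hv0, hvv, LieSubalgebra.mem_maxTrivSubmodule_iff.mp (htop ▸ LieSubmodule.mem_top v)⟩
  · obtain ⟨v, hvE, hv0, hvv⟩ := LieModule.exists_mem_maxTrivSubmodule_ne_zero_apply_self_eq_zero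
      (minkowskiForm_nondegenerate n) hinv htop
    rw [minkowskiForm_apply] at hvv
    exact ⟨v, hv0, hvv, LieSubalgebra.mem_maxTrivSubmodule_iff.mp hvE⟩
end

section
/- There is no surjective Lie algebra homomorphism from any Lie subalgebra u of R ⋉ heis^C(2n-3) onto the quaternionic Heisenberg Lie algebra heis^H(7). -/
noncomputable section

/-! ### The semidirect product `ℝ ⋉ heis^ℂ(2m+1)` -/

/-- Underlying space of the semidirect product `ℝ ⋉ heis^ℂ(2m+1)` (with
`heis^ℂ(2m+1) = ℂ^m ⊕ ℝ·Z`); for `m = n-2` this is `ℝ ⋉ heis^ℂ(2n-3)`. -/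
def SDHeisC (m : ℕ) : Type := ℝ × (Fin m → ℂ) × ℝ

namespace SDHeisC

variable {m : ℕ}

instance : AddCommGroup (SDHeisC m) :=
  inferInstanceAs (AddCommGroup (ℝ × (Fin m → ℂ) × ℝ))

instance : Module ℝ (SDHeisC m) :=
  inferInstanceAs (Module ℝ (ℝ × (Fin m → ℂ) × ℝ))

/-- The standard symplectic form on `ℂ^m ≅ ℝ^{2m}`. -/
def omegaC (z w : Fin m → ℂ) : ℝ := ∑ i, (z i * (starRingEnd ℂ) (w i)).im

/-- The derivation of `heis^ℂ(2m+1)` given by `(u + iv) + αZ ↦ v + 0·Z`. -/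
def Dmap (z : Fin m → ℂ) : Fin m → ℂ := fun i => ((z i).im : ℂ)

lemma omegaC_add_left (z z' w : Fin m → ℂ) :
    omegaC (z + z') w = omegaC z w + omegaC z' w := by
  simp [omegaC, add_mul, Finset.sum_add_distrib]

lemma omegaC_add_right (z w w' : Fin m → ℂ) :
    omegaC z (w + w') = omegaC z w + omegaC z w' := by
  simp [omegaC, mul_add, Finset.sum_add_distrib]

lemma omegaC_smul_left (t : ℝ) (z w : Fin m → ℂ) :
    omegaC (t • z) w = t * omegaC z w := by
  simp [omegaC, Pi.smul_apply, Complex.real_smul, mul_assoc, Finset.mul_sum]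

lemma omegaC_smul_right (t : ℝ) (z w : Fin m → ℂ) :
    omegaC z (t • w) = t * omegaC z w := by
  simp only [omegaC, Pi.smul_apply, Complex.real_smul, map_mul, Complex.conj_ofReal,
    Finset.mul_sum]
  refine Finset.sum_congr rfl fun i _ => ?_
  rw [mul_left_comm]
  simp [Complex.mul_im]

lemma omegaC_neg_right (z w : Fin m → ℂ) : omegaC z (-w) = -omegaC z w := by
  simp only [omegaC, Pi.neg_apply, map_neg, mul_neg, Complex.neg_im,
    Finset.sum_neg_distrib]

lemma omegaC_sub_right (z w w' : Fin m → ℂ) :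
    omegaC z (w - w') = omegaC z w - omegaC z w' := by
  rw [sub_eq_add_neg, omegaC_add_right, omegaC_neg_right, sub_eq_add_neg]

lemma omegaC_neg_left (z w : Fin m → ℂ) : omegaC (-z) w = -omegaC z w := by
  simp only [omegaC, Pi.neg_apply, neg_mul, Complex.neg_im, Finset.sum_neg_distrib]

lemma omegaC_sub_left (z z' w : Fin m → ℂ) :
    omegaC (z - z') w = omegaC z w - omegaC z' w := by
  rw [sub_eq_add_neg, omegaC_add_left, omegaC_neg_left, sub_eq_add_neg]

lemma omegaC_self (z : Fin m → ℂ) : omegaC z z = 0 := by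
  simp [omegaC, Complex.mul_conj]

lemma omegaC_zero_left (w : Fin m → ℂ) : omegaC 0 w = 0 := by simp [omegaC]

lemma omegaC_zero_right (z : Fin m → ℂ) : omegaC z 0 = 0 := by simp [omegaC]

lemma Dmap_add (z w : Fin m → ℂ) : Dmap (z + w) = Dmap z + Dmap w := by
  funext i; simp [Dmap]

lemma Dmap_smul (t : ℝ) (z : Fin m → ℂ) : Dmap (t • z) = t • Dmap z := by
  funext i
  simp [Dmap, Complex.real_smul, Complex.mul_im]

lemma Dmap_sub (z w : Fin m → ℂ) : Dmap (z - w) = Dmap z - Dmap w := by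
  funext i; simp [Dmap]

lemma Dmap_zero : Dmap (0 : Fin m → ℂ) = 0 := by funext i; simp [Dmap]

lemma Dmap_Dmap (z : Fin m → ℂ) : Dmap (Dmap z) = 0 := by
  funext i; simp [Dmap]

lemma omegaC_Dmap_right (z w : Fin m → ℂ) :
    omegaC z (Dmap w) = ∑ i, (w i).im * (z i).im := by
  simp only [omegaC, Dmap]
  refine Finset.sum_congr rfl fun i _ => ?_
  rw [Complex.conj_ofReal]
  simp [Complex.mul_im, mul_comm]

lemma omegaC_Dmap_left (z w : Fin m → ℂ) :
    omegaC (Dmap z) w = -omegaC z (Dmap w) := by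
  rw [omegaC_Dmap_right]
  simp only [omegaC, Dmap, ← Finset.sum_neg_distrib]
  refine Finset.sum_congr rfl fun i _ => ?_
  simp only [Complex.mul_im, Complex.ofReal_re, Complex.ofReal_im, Complex.conj_re,
    Complex.conj_im]
  ring

lemma omegaC_Dmap_symm (z w : Fin m → ℂ) :
    omegaC z (Dmap w) = omegaC w (Dmap z) := by
  rw [omegaC_Dmap_right, omegaC_Dmap_right]
  exact Finset.sum_congr rfl fun i _ => by ring

@[simp] lemma fst_add (x y : SDHeisC m) : (x + y).1 = x.1 + y.1 := rfl
@[simp] lemma snd_fst_add (x y : SDHeisC m) : (x + y).2.1 = x.2.1 + y.2.1 := rfl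
@[simp] lemma snd_snd_add (x y : SDHeisC m) : (x + y).2.2 = x.2.2 + y.2.2 := rfl
@[simp] lemma fst_smul (t : ℝ) (x : SDHeisC m) : (t • x).1 = t • x.1 := rfl
@[simp] lemma snd_fst_smul (t : ℝ) (x : SDHeisC m) : (t • x).2.1 = t • x.2.1 := rfl
@[simp] lemma snd_snd_smul (t : ℝ) (x : SDHeisC m) : (t • x).2.2 = t • x.2.2 := rfl
@[simp] lemma fst_zero : (0 : SDHeisC m).1 = 0 := rfl
@[simp] lemma snd_fst_zero : (0 : SDHeisC m).2.1 = 0 := rfl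
@[simp] lemma snd_snd_zero : (0 : SDHeisC m).2.2 = 0 := rfl

/-- The Lie bracket of `ℝ ⋉ heis^ℂ(2m+1)`:
`[(t,z,α), (t',z',α')] = (0, t•D(z') - t'•D(z), ω_ℂ(z,z'))`, where `D` is the derivation
`(u + iv) + αZ ↦ v + 0·Z` of the Heisenberg ideal `{t = 0} ≅ heis^ℂ(2m+1)`. -/
instance : LieRing (SDHeisC m) where
  bracket x y := (0, x.1 • Dmap y.2.1 - y.1 • Dmap x.2.1, omegaC x.2.1 y.2.1)
  add_lie x y z := by
    refine Prod.ext ?_ (Prod.ext ?_ ?_)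
    · show (0 : ℝ) = 0 + 0
      simp
    · show (x + y).1 • Dmap z.2.1 - z.1 • Dmap ((x + y).2.1)
        = (x.1 • Dmap z.2.1 - z.1 • Dmap x.2.1) + (y.1 • Dmap z.2.1 - z.1 • Dmap y.2.1)
      rw [fst_add, snd_fst_add, Dmap_add, add_smul, smul_add]
      abel
    · show omegaC ((x + y).2.1) z.2.1 = omegaC x.2.1 z.2.1 + omegaC y.2.1 z.2.1
      rw [snd_fst_add, omegaC_add_left]
  lie_add x y z := by
    refine Prod.ext ?_ (Prod.ext ?_ ?_)
    · show (0 : ℝ) = 0 + 0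
      simp
    · show x.1 • Dmap ((y + z).2.1) - (y + z).1 • Dmap x.2.1
        = (x.1 • Dmap y.2.1 - y.1 • Dmap x.2.1) + (x.1 • Dmap z.2.1 - z.1 • Dmap x.2.1)
      rw [fst_add, snd_fst_add, Dmap_add, add_smul, smul_add]
      abel
    · show omegaC x.2.1 ((y + z).2.1) = omegaC x.2.1 y.2.1 + omegaC x.2.1 z.2.1
      rw [snd_fst_add, omegaC_add_right]
  lie_self x := by
    refine Prod.ext ?_ (Prod.ext ?_ ?_)
    · rfl
    · show x.1 • Dmap x.2.1 - x.1 • Dmap x.2.1 = 0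
      simp
    · exact omegaC_self x.2.1
  leibniz_lie x y z := by
    refine Prod.ext ?_ (Prod.ext ?_ ?_)
    · show (0 : ℝ) = 0 + 0
      simp
    · show x.1 • Dmap (y.1 • Dmap z.2.1 - z.1 • Dmap y.2.1) - (0 : ℝ) • Dmap x.2.1
        = ((0 : ℝ) • Dmap z.2.1 - z.1 • Dmap (x.1 • Dmap y.2.1 - y.1 • Dmap x.2.1))
          + (y.1 • Dmap (x.1 • Dmap z.2.1 - z.1 • Dmap x.2.1) - (0 : ℝ) • Dmap y.2.1)
      simp [Dmap_sub, Dmap_smul, Dmap_Dmap]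
    · show omegaC x.2.1 (y.1 • Dmap z.2.1 - z.1 • Dmap y.2.1)
        = omegaC (x.1 • Dmap y.2.1 - y.1 • Dmap x.2.1) z.2.1
          + omegaC y.2.1 (x.1 • Dmap z.2.1 - z.1 • Dmap x.2.1)
      rw [omegaC_sub_right, omegaC_sub_left, omegaC_sub_right, omegaC_smul_right,
        omegaC_smul_right, omegaC_smul_left, omegaC_smul_left, omegaC_smul_right,
        omegaC_smul_right, omegaC_Dmap_left x.2.1 z.2.1, omegaC_Dmap_left y.2.1 z.2.1,
        omegaC_Dmap_symm y.2.1 x.2.1]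
      ring


instance : LieAlgebra ℝ (SDHeisC m) where
  lie_smul t x y := by
    refine Prod.ext ?_ (Prod.ext ?_ ?_)
    · show (0 : ℝ) = t • (0 : ℝ)
      simp
    · show x.1 • Dmap ((t • y).2.1) - (t • y).1 • Dmap x.2.1
        = t • (x.1 • Dmap y.2.1 - y.1 • Dmap x.2.1)
      rw [fst_smul, snd_fst_smul, Dmap_smul]
      simp only [smul_eq_mul]
      module
    · show omegaC x.2.1 ((t • y).2.1) = t • omegaC x.2.1 y.2.1
      rw [snd_fst_smul, omegaC_smul_right, smul_eq_mul]

end SDHeisC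

/-! ### The quaternionic Heisenberg algebra `heis^ℍ(7)` -/

open Quaternion in
/-- The imaginary-part commutator `q·q̄' - q'·q̄`, recorded as a vector in `ℝ³`. -/
def omegaH (q q' : ℍ[ℝ]) : Fin 3 → ℝ :=
  ![(q * star q' - q' * star q).imI, (q * star q' - q' * star q).imJ,
    (q * star q' - q' * star q).imK]

/-- Underlying space `ℍ ⊕ span(Z_i, Z_j, Z_k)` of the quaternionic Heisenberg Lie
algebra `heis^ℍ(7)`. -/
def HeisH : Type := Quaternion ℝ × (Fin 3 → ℝ)

namespace HeisH

instance : AddCommGroup HeisH :=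
  inferInstanceAs (AddCommGroup (Quaternion ℝ × (Fin 3 → ℝ)))

instance : Module ℝ HeisH :=
  inferInstanceAs (Module ℝ (Quaternion ℝ × (Fin 3 → ℝ)))

lemma omegaH_add_left (a b c : Quaternion ℝ) :
    omegaH (a + b) c = omegaH a c + omegaH b c := by
  funext i
  fin_cases i <;> simp [omegaH] <;> ring

lemma omegaH_add_right (a b c : Quaternion ℝ) :
    omegaH a (b + c) = omegaH a b + omegaH a c := by
  funext i
  fin_cases i <;> simp [omegaH] <;> ring

lemma omegaH_smul_left (t : ℝ) (a b : Quaternion ℝ) :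
    omegaH (t • a) b = t • omegaH a b := by
  funext i
  fin_cases i <;> simp [omegaH] <;> ring

lemma omegaH_smul_right (t : ℝ) (a b : Quaternion ℝ) :
    omegaH a (t • b) = t • omegaH a b := by
  funext i
  fin_cases i <;> simp [omegaH] <;> ring

lemma omegaH_self (a : Quaternion ℝ) : omegaH a a = 0 := by
  funext i
  fin_cases i <;> simp [omegaH] <;> rfl

lemma omegaH_zero_left (a : Quaternion ℝ) : omegaH 0 a = 0 := by
  funext i
  fin_cases i <;> simp [omegaH] <;> rfl

lemma omegaH_zero_right (a : Quaternion ℝ) : omegaH a 0 = 0 := by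
  funext i
  fin_cases i <;> simp [omegaH] <;> rfl

/-- The Lie bracket of `heis^ℍ(7)`: `[(q,z), (q',z')] = (0, ω_ℍ(q,q'))`, with center
`span(Z_i, Z_j, Z_k)`. -/
instance : LieRing HeisH where
  bracket x y := (0, omegaH x.1 y.1)
  add_lie x y z := by
    refine Prod.ext ?_ ?_
    · show (0 : Quaternion ℝ) = 0 + 0; simp
    · show omegaH (x + y).1 z.1 = omegaH x.1 z.1 + omegaH y.1 z.1
      exact omegaH_add_left x.1 y.1 z.1
  lie_add x y z := by
    refine Prod.ext ?_ ?_
    · show (0 : Quaternion ℝ) = 0 + 0; simp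
    · show omegaH x.1 (y + z).1 = omegaH x.1 y.1 + omegaH x.1 z.1
      exact omegaH_add_right x.1 y.1 z.1
  lie_self x := by
    refine Prod.ext ?_ ?_
    · rfl
    · exact omegaH_self x.1
  leibniz_lie x y z := by
    refine Prod.ext ?_ ?_
    · show (0 : Quaternion ℝ) = 0 + 0; simp
    · show omegaH x.1 (0 : Quaternion ℝ) = omegaH 0 z.1 + omegaH y.1 0
      rw [omegaH_zero_left, omegaH_zero_right, omegaH_zero_right]
      simp

instance : LieAlgebra ℝ HeisH where
  lie_smul t x y := by
    refine Prod.ext ?_ ?_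
    · show (0 : Quaternion ℝ) = t • 0; simp
    · show omegaH x.1 ((t • y).1) = t • omegaH x.1 y.1
      exact omegaH_smul_right t x.1 y.1

end HeisH

/-! A surjection `f : u → heis^ℍ(7)` has a linear section `g`. The `ℝ`-coordinate of `g` on `ℍ`
is a linear functional, so its kernel contains three linearly independent quaternions
`q₀, q₁, q₂`, whose lifts `g qᵢ` lie in the Heisenberg ideal `{t = 0}`. There every bracket is a
multiple of the central vector `Z`, so `⁅g q₀, g q₁⁆` and `⁅g q₀, g q₂⁆` are linearly dependent,
and hence so are their images `ω_ℍ(q₀, q₁)` and `ω_ℍ(q₀, q₂)`. But `ω_ℍ(q, q')` is twice the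
imaginary part of `q q̄'`, which vanishes only when `q'` is a real multiple of `q`; so
`ω_ℍ(q₀, s q₁ + t q₂) = 0` forces `s = t = 0`. -/

lemma not_linearIndependent_smul_pair {K V : Type*} [CommRing K] [Nontrivial K] [AddCommGroup V]
    [Module K V] (a b : K) (w : V) : ¬ LinearIndependent K ![a • w, b • w] := by
  rw [LinearIndependent.pair_iff]
  push Not
  by_cases ha : a = 0
  · exact ⟨1, 0, by simp [ha], by simp⟩
  · exact ⟨b, -a, by rw [smul_smul, smul_smul, mul_comm, neg_mul, neg_smul, add_neg_cancel],
      fun _ => neg_ne_zero.mpr ha⟩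

lemma LinearMap.exists_linearIndependent_map_eq_zero {K V : Type*} [Field K] [AddCommGroup V]
    [Module K V] [FiniteDimensional K V] (φ : V →ₗ[K] K) {n : ℕ}
    (hn : n + 1 ≤ Module.finrank K V) :
    ∃ v : Fin n → V, LinearIndependent K v ∧ ∀ i, φ (v i) = 0 := by
  have hker : n ≤ Module.finrank K (LinearMap.ker φ) := by
    have hrange : Module.finrank K (LinearMap.range φ) ≤ 1 :=
      (Submodule.finrank_le _).trans (Module.finrank_self K).le
    have := φ.finrank_range_add_finrank_ker
    omega
  obtain ⟨v, hv⟩ := exists_linearIndependent_of_le_finrank hker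
  exact ⟨_, hv.map' _ (LinearMap.ker φ).ker_subtype, fun i => (v i).2⟩

lemma LieSubalgebra.linearIndependent_lie_pair_of_map {K L M : Type*} [CommRing K] [LieRing L]
    [LieAlgebra K L] [LieRing M] [LieAlgebra K M] {u : LieSubalgebra K L} (f : u →ₗ⁅K⁆ M)
    (x y z : u) (h : LinearIndependent K ![⁅f x, f y⁆, ⁅f x, f z⁆]) :
    LinearIndependent K ![⁅(x : L), (y : L)⁆, ⁅(x : L), (z : L)⁆] := by
  rw [LinearIndependent.pair_iff] at h ⊢
  intro s t hst
  refine h s t ?_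
  have hu : s • ⁅x, y⁆ + t • ⁅x, z⁆ = 0 := Subtype.ext hst
  rw [← f.map_lie, ← f.map_lie, ← map_smul, ← map_smul, ← map_add, hu, map_zero]

namespace SDHeisC

variable {m : ℕ}

def fstLinear : SDHeisC m →ₗ[ℝ] ℝ := LinearMap.fst ℝ ℝ ((Fin m → ℂ) × ℝ)

def centralZ : SDHeisC m := ((0, 0, 1) : ℝ × (Fin m → ℂ) × ℝ)

lemma lie_eq_smul_centralZ {x y : SDHeisC m} (hx : x.1 = 0) (hy : y.1 = 0) :
    ⁅x, y⁆ = omegaC x.2.1 y.2.1 • centralZ := by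
  show ((0 : ℝ), x.1 • Dmap y.2.1 - y.1 • Dmap x.2.1, omegaC x.2.1 y.2.1) = _
  rw [hx, hy]
  show _ = omegaC x.2.1 y.2.1 • ((0, 0, 1) : ℝ × (Fin m → ℂ) × ℝ)
  simp

lemma not_linearIndependent_lie_pair {x y z : SDHeisC m} (hx : x.1 = 0) (hy : y.1 = 0)
    (hz : z.1 = 0) : ¬ LinearIndependent ℝ ![⁅x, y⁆, ⁅x, z⁆] := by
  rw [lie_eq_smul_centralZ hx hy, lie_eq_smul_centralZ hx hz]
  exact not_linearIndependent_smul_pair _ _ _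

end SDHeisC

namespace HeisH

open Quaternion

def ofQuaternion : ℍ[ℝ] →ₗ[ℝ] HeisH := LinearMap.inl ℝ ℍ[ℝ] (Fin 3 → ℝ)

lemma mul_star_eq_of_omegaH_eq_zero {q q' : ℍ[ℝ]} (h : omegaH q q' = 0) :
    q * star q' = q' * star q := by
  rw [← sub_eq_zero]
  ext
  · simp only [re_sub, re_mul, re_star, imI_star, imJ_star, imK_star, re_zero]
    ring
  · exact congrFun h 0
  · exact congrFun h 1
  · exact congrFun h 2

lemma normSq_smul_eq_of_omegaH_eq_zero {q q' : ℍ[ℝ]} (h : omegaH q q' = 0) :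
    normSq q • q' = (q * star q').re • q := by
  have h' := mul_star_eq_of_omegaH_eq_zero h
  have hreal : q * star q' = ((q * star q').re : ℍ[ℝ]) := by
    rw [← star_eq_self, star_mul, star_star, h']
  calc normSq q • q' = q' * star q * q := by
        rw [mul_assoc, star_mul_self, mul_coe_eq_smul]
    _ = (q * star q').re • q := by
        rw [← h', hreal, coe_mul_eq_smul, re_coe]

lemma linearIndependent_omegaH_pair {v : Fin 3 → ℍ[ℝ]} (hv : LinearIndependent ℝ v) :
    LinearIndependent ℝ ![omegaH (v 0) (v 1), omegaH (v 0) (v 2)] := by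
  rw [LinearIndependent.pair_iff]
  intro s t hst
  have hω : omegaH (v 0) (s • v 1 + t • v 2) = 0 := by
    rw [omegaH_add_right, omegaH_smul_right, omegaH_smul_right, hst]
  have hrel := normSq_smul_eq_of_omegaH_eq_zero hω
  set c := (v 0 * star (s • v 1 + t • v 2)).re
  have hN : normSq (v 0) ≠ 0 := normSq_ne_zero.mpr (hv.ne_zero 0)
  have hcoeff := Fintype.linearIndependent_iff.mp hv ![-c, normSq (v 0) * s, normSq (v 0) * t]
    (by simp [Fin.sum_univ_three]; linear_combination (norm := module) hrel)
  exact ⟨(mul_eq_zero.mp (hcoeff 1)).resolve_left hN, (mul_eq_zero.mp (hcoeff 2)).resolve_left hN⟩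

lemma exists_linearIndependent_lie_pair (τ : ℍ[ℝ] →ₗ[ℝ] ℝ) :
    ∃ v : Fin 3 → ℍ[ℝ], (∀ i, τ (v i) = 0) ∧ LinearIndependent ℝ
      ![⁅ofQuaternion (v 0), ofQuaternion (v 1)⁆, ⁅ofQuaternion (v 0), ofQuaternion (v 2)⁆] := by
  obtain ⟨v, hv, hτ⟩ := τ.exists_linearIndependent_map_eq_zero (n := 3)
    (by rw [Quaternion.finrank_eq_four])
  refine ⟨v, hτ, ?_⟩
  have hω := linearIndependent_omegaH_pair hv
  rw [LinearIndependent.pair_iff] at hω ⊢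
  exact fun s t hst => hω s t (congrArg Prod.snd hst)

end HeisH

theorem no_surjection_onto_heisH_general (n : ℕ)
    (u : LieSubalgebra ℝ (SDHeisC (n - 2))) (f : ↥u →ₗ⁅ℝ⁆ HeisH) :
    ¬ Function.Surjective f := by
  intro hf
  obtain ⟨g, hg⟩ := (f : u →ₗ[ℝ] HeisH).exists_rightInverse_of_surjective
    (LinearMap.range_eq_top.mpr hf)
  obtain ⟨v, hτ, hv⟩ := HeisH.exists_linearIndependent_lie_pair
    (SDHeisC.fstLinear ∘ₗ u.toSubmodule.subtype ∘ₗ g ∘ₗ HeisH.ofQuaternion)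
  set x : Fin 3 → u := fun i => g (HeisH.ofQuaternion (v i))
  have hfx : ∀ i, f (x i) = HeisH.ofQuaternion (v i) := fun i => LinearMap.congr_fun hg _
  rw [← hfx, ← hfx, ← hfx] at hv
  exact SDHeisC.not_linearIndependent_lie_pair (hτ 0) (hτ 1) (hτ 2)
    (LieSubalgebra.linearIndependent_lie_pair_of_map f _ _ _ hv)

/-- There is no surjective Lie algebra homomorphism from any Lie subalgebra `u` of
`ℝ ⋉ heis^ℂ(2n-3)` onto the quaternionic Heisenberg Lie algebra `heis^ℍ(7)`. -/
theorem no_surjection_onto_heisH (n : ℕ) (hn : 3 ≤ n)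
    (u : LieSubalgebra ℝ (SDHeisC (n - 2))) (f : ↥u →ₗ⁅ℝ⁆ HeisH) :
    ¬ Function.Surjective f :=
  no_surjection_onto_heisH_general n u f
end
end

section
/- If h' is a Lie subalgebra of o(1,k) (k ≥ 2) satisfying [h_α, h'] ⊆ h' and h' ∩ h_{-α} ≠ 0, then h' = o(1,k). -/
open Matrix

/-- Index set for blocks of sizes `1, k-1, 1` (here `m = k-1`, `k ≥ 2`). -/
abbrev Idx (m : ℕ) := Fin 1 ⊕ Fin m ⊕ Fin 1

/-- The antidiagonal-type Lorentz form matrix `J_{1,k}`. -/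
def lorJ (m : ℕ) : Matrix (Idx m) (Idx m) ℝ := fun i j =>
  match i, j with
  | Sum.inl _, Sum.inr (Sum.inr _) => 1
  | Sum.inr (Sum.inr _), Sum.inl _ => 1
  | Sum.inr (Sum.inl i), Sum.inr (Sum.inl j) => if i = j then 1 else 0
  | _, _ => 0

/-- Element of the negative root space `h_{-α}` of `o(1,k)`, parametrized by `v ∈ ℝ^{k-1}`. -/
def Yneg (m : ℕ) (v : Fin m → ℝ) : Matrix (Idx m) (Idx m) ℝ := fun i j =>
  match i, j with
  | Sum.inr (Sum.inl i), Sum.inl _ => -v i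
  | Sum.inr (Sum.inr _), Sum.inr (Sum.inl j) => v j
  | _, _ => 0

/-- Element of the positive root space `h_α` of `o(1,k)`, parametrized by `u ∈ ℝ^{k-1}`. -/
def Upos (m : ℕ) (u : Fin m → ℝ) : Matrix (Idx m) (Idx m) ℝ := fun i j =>
  match i, j with
  | Sum.inl _, Sum.inr (Sum.inl j) => u j
  | Sum.inr (Sum.inl i), Sum.inr (Sum.inr _) => -u i
  | _, _ => 0

/-!
The bracket relations `[h_α, h_{-α}] ⊆ a ⊕ m` and `[a ⊕ m, h_{±α}] ⊆ h_{±α}` do all the work.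
If `0 ≠ v` and `Y_v ∈ h'`, then `[[U_u, Y_v], Y_v] = Y_{2⟨u,v⟩v - |v|²u}` lies in `h'`, and together
with `Y_v` this gives all of `h_{-α}`. Next `[U_v, Y_v] = -|v|² H` puts the Cartan generator `H`
in `h'`; the elements `[U_u, Y_w] + ⟨u,w⟩ H` are the rank-two skew blocks `w uᵀ - u wᵀ`, which
span `m`; and `[U_u, H] = -U_u` gives `h_α`. Every `M` with `Mᵀ J + J M = 0` is a sum of
elements of `a`, `m`, `h_α` and `h_{-α}`.
-/

namespace Ring

lemma smul_add_lie {R A : Type*} [CommRing R] [Ring A] [Algebra R A] (c : R) (x y z : A) :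
    ⁅c • x + y, z⁆ = c • ⁅x, z⁆ + ⁅y, z⁆ := by
  simp only [Ring.lie_def, add_mul, mul_add, smul_mul_assoc, mul_smul_comm, smul_sub]
  abel

end Ring

namespace Matrix

lemma transpose_vecMulVec_sub_vecMulVec {n R : Type*} [CommRing R] (u v : n → R) :
    (vecMulVec v u - vecMulVec u v)ᵀ = -(vecMulVec v u - vecMulVec u v) := by
  simp [transpose_sub]

lemma sub_transpose_eq_sum {n R : Type*} [Fintype n] [DecidableEq n] [CommRing R]
    (A : Matrix n n R) :
    A - Aᵀ = ∑ j, (vecMulVec (Aᵀ j) (Pi.single j 1) - vecMulVec (Pi.single j 1) (Aᵀ j)) := by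
  ext a b
  simp [Finset.sum_sub_distrib, Matrix.sum_apply, vecMulVec_apply, Pi.single_apply]

end Matrix

namespace LorentzAlgebra

variable {m : ℕ}

/-- The generator `H` of the Cartan subspace `a`. -/
def cartanH (m : ℕ) : Matrix (Idx m) (Idx m) ℝ := fromBlocks 1 0 0 (fromBlocks 0 0 0 (-1))

/-- On skew-symmetric matrices, the image of this map is `m ≅ o(k-1)`. -/
def midBlock (m : ℕ) : Matrix (Fin m) (Fin m) ℝ →ₗ[ℝ] Matrix (Idx m) (Idx m) ℝ where
  toFun A := fromBlocks 0 0 0 (fromBlocks A 0 0 0)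
  map_add' A B := by simp [fromBlocks_add]
  map_smul' c A := by simp [fromBlocks_smul]

/-- `lorJ m` is the permutation matrix of this transposition of the two null coordinates. -/
def nullSwap (m : ℕ) : Equiv.Perm (Idx m) := Equiv.swap (Sum.inl 0) (Sum.inr (Sum.inr 0))

@[simp]
lemma Yneg_add (v w : Fin m → ℝ) : Yneg m (v + w) = Yneg m v + Yneg m w := by
  ext i j
  rcases i with i | i | i <;> rcases j with j | j | j <;> simp [Yneg]; ring

@[simp]
lemma Yneg_smul (c : ℝ) (v : Fin m → ℝ) : Yneg m (c • v) = c • Yneg m v := by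
  ext i j
  rcases i with i | i | i <;> rcases j with j | j | j <;> simp [Yneg]

@[simp]
lemma Yneg_neg (v : Fin m → ℝ) : Yneg m (-v) = -Yneg m v := by
  simpa using Yneg_smul (-1) v

@[simp]
lemma Yneg_sub (v w : Fin m → ℝ) : Yneg m (v - w) = Yneg m v - Yneg m w := by
  simp [sub_eq_add_neg]

lemma lie_Upos_Yneg (u v : Fin m → ℝ) :
    ⁅Upos m u, Yneg m v⁆ =
      -(u ⬝ᵥ v) • cartanH m + midBlock m (vecMulVec v u - vecMulVec u v) := by
  ext i j
  rcases i with i | i | i <;> rcases j with j | j | j <;>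
    simp [Ring.lie_def, mul_apply, Fintype.sum_sum_type, Upos, Yneg, cartanH, midBlock,
      one_apply, Fin.fin_one_eq_zero, dotProduct, vecMulVec_apply, mul_comm]; ring

lemma lie_cartanH_Yneg (v : Fin m → ℝ) : ⁅cartanH m, Yneg m v⁆ = -Yneg m v := by
  ext i j
  rcases i with i | i | i <;> rcases j with j | j | j <;>
    simp [Ring.lie_def, mul_apply, Fintype.sum_sum_type, Yneg, cartanH, one_apply,
      Fin.fin_one_eq_zero]

lemma lie_midBlock_Yneg {A : Matrix (Fin m) (Fin m) ℝ} (hA : Aᵀ = -A) (v : Fin m → ℝ) :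
    ⁅midBlock m A, Yneg m v⁆ = Yneg m (A *ᵥ v) := by
  have hvA : ∀ j, ∑ k, v k * A k j = -∑ k, A j k * v k := fun j => by
    simpa [vecMul, mulVec, dotProduct] using
      congrFun (show v ᵥ* A = -(A *ᵥ v) by rw [← vecMul_transpose, hA, vecMul_neg, neg_neg]) j
  ext i j
  rcases i with i | i | i <;> rcases j with j | j | j <;>
    simp [Ring.lie_def, mul_apply, Fintype.sum_sum_type, Yneg, midBlock, mulVec, dotProduct,
      hvA]

lemma lie_Upos_cartanH (u : Fin m → ℝ) : ⁅Upos m u, cartanH m⁆ = -Upos m u := by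
  ext i j
  rcases i with i | i | i <;> rcases j with j | j | j <;>
    simp [Ring.lie_def, mul_apply, Fintype.sum_sum_type, Upos, cartanH, one_apply,
      Fin.fin_one_eq_zero]

/-- The identity `[[Y, θX], Y] = B_θ(X,Y) Y - ½ B_θ(Y,Y) X`, up to the normalisation of `B_θ`. -/
lemma lie_lie_Upos_Yneg (u v : Fin m → ℝ) :
    ⁅⁅Upos m u, Yneg m v⁆, Yneg m v⁆ = Yneg m ((2 * (u ⬝ᵥ v)) • v - (v ⬝ᵥ v) • u) := by
  rw [lie_Upos_Yneg, Ring.smul_add_lie, lie_cartanH_Yneg,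
    lie_midBlock_Yneg (transpose_vecMulVec_sub_vecMulVec u v), sub_mulVec, vecMulVec_mulVec,
    vecMulVec_mulVec, op_smul_eq_smul, op_smul_eq_smul]
  simp only [Yneg_sub, Yneg_smul, smul_neg]
  module

lemma lorJ_mul_apply (M : Matrix (Idx m) (Idx m) ℝ) (p q : Idx m) :
    (lorJ m * M) p q = M (nullSwap m p) q := by
  rcases p with p | p | p <;>
    simp [mul_apply, Fintype.sum_sum_type, lorJ, nullSwap, Equiv.swap_apply_def,
      Fin.fin_one_eq_zero]

lemma lorJ_transpose : (lorJ m)ᵀ = lorJ m := by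
  ext p q
  rcases p with p | p | p <;> rcases q with q | q | q <;> simp [lorJ, eq_comm]

lemma apply_nullSwap_add_apply_nullSwap {M : Matrix (Idx m) (Idx m) ℝ}
    (hM : Mᵀ * lorJ m + lorJ m * M = 0) (p q : Idx m) :
    M (nullSwap m q) p + M (nullSwap m p) q = 0 := by
  have h := congrFun (congrFun hM p) q
  rwa [← lorJ_transpose, ← transpose_mul, lorJ_transpose, Matrix.add_apply, transpose_apply,
    lorJ_mul_apply, lorJ_mul_apply] at h

lemma eq_of_transpose_mul_lorJ_add {M : Matrix (Idx m) (Idx m) ℝ}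
    (hM : Mᵀ * lorJ m + lorJ m * M = 0) :
    M = M (.inl 0) (.inl 0) • cartanH m
      + midBlock m (M.submatrix (Sum.inr ∘ Sum.inl) (Sum.inr ∘ Sum.inl))
      + Upos m (fun j => M (.inl 0) (.inr (.inl j)))
      + Yneg m (fun i => -M (.inr (.inl i)) (.inl 0)) := by
  ext p q
  -- each entry is pinned down by one of these three instances of the defining relation
  have hqq := apply_nullSwap_add_apply_nullSwap hM q q
  have hpq := apply_nullSwap_add_apply_nullSwap hM p q
  have hsq := apply_nullSwap_add_apply_nullSwap hM (nullSwap m p) q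
  rcases p with p | p | p <;> rcases q with q | q | q <;>
    simp [nullSwap, Equiv.swap_apply_def, cartanH, midBlock, Upos, Yneg, one_apply,
      Fin.fin_one_eq_zero] at hqq hpq hsq ⊢ <;> linarith

lemma transpose_submatrix_inr_inl_of_transpose_mul_lorJ_add {M : Matrix (Idx m) (Idx m) ℝ}
    (hM : Mᵀ * lorJ m + lorJ m * M = 0) :
    (M.submatrix (Sum.inr ∘ Sum.inl) (Sum.inr ∘ Sum.inl))ᵀ
      = -M.submatrix (Sum.inr ∘ Sum.inl) (Sum.inr ∘ Sum.inl) := by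
  ext i j
  have h := apply_nullSwap_add_apply_nullSwap hM (.inr (.inl i)) (.inr (.inl j))
  have hfix : ∀ k, nullSwap m (.inr (.inl k)) = .inr (.inl k) := fun k =>
    Equiv.swap_apply_of_ne_of_ne (by simp) (by simp)
  rw [hfix, hfix] at h
  simpa using eq_neg_of_add_eq_zero_left h

section Membership

variable {p : Submodule ℝ (Matrix (Idx m) (Idx m) ℝ)}

lemma Yneg_mem_of_ne_zero (hbr : ∀ M ∈ p, ∀ M' ∈ p, ⁅M, M'⁆ ∈ p)
    (hstab : ∀ u : Fin m → ℝ, ∀ M ∈ p, ⁅Upos m u, M⁆ ∈ p) {v : Fin m → ℝ} (hv0 : v ≠ 0)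
    (hv : Yneg m v ∈ p) (w : Fin m → ℝ) : Yneg m w ∈ p := by
  have h := hbr _ (hstab w _ hv) _ hv
  rw [lie_lie_Upos_Yneg, Yneg_sub, Yneg_smul, Yneg_smul] at h
  have hw : (v ⬝ᵥ v) • Yneg m w ∈ p := by
    simpa using p.sub_mem (p.smul_mem (2 * (w ⬝ᵥ v)) hv) h
  exact (p.smul_mem_iff (dotProduct_self_eq_zero.not.mpr hv0)).mp hw

lemma cartanH_mem (hstab : ∀ u : Fin m → ℝ, ∀ M ∈ p, ⁅Upos m u, M⁆ ∈ p)
    {v : Fin m → ℝ} (hv0 : v ≠ 0) (hv : Yneg m v ∈ p) : cartanH m ∈ p := by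
  have h := hstab v _ hv
  rw [lie_Upos_Yneg, sub_self, map_zero, add_zero] at h
  exact (p.smul_mem_iff (neg_ne_zero.mpr (dotProduct_self_eq_zero.not.mpr hv0))).mp h

lemma midBlock_mem (hstab : ∀ u : Fin m → ℝ, ∀ M ∈ p, ⁅Upos m u, M⁆ ∈ p)
    (hY : ∀ w, Yneg m w ∈ p) (hH : cartanH m ∈ p)
    {A : Matrix (Fin m) (Fin m) ℝ} (hA : Aᵀ = -A) : midBlock m A ∈ p := by
  have hgen : ∀ u v, midBlock m (vecMulVec v u - vecMulVec u v) ∈ p := fun u v => by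
    have h := hstab u _ (hY v)
    rw [lie_Upos_Yneg] at h
    simpa using p.add_mem h (p.smul_mem (u ⬝ᵥ v) hH)
  have hA2 : A = (2⁻¹ : ℝ) • (A - Aᵀ) := by rw [hA]; module
  rw [hA2, map_smul, sub_transpose_eq_sum, map_sum]
  exact p.smul_mem _ (p.sum_mem fun j _ => hgen _ _)

lemma Upos_mem (hstab : ∀ u : Fin m → ℝ, ∀ M ∈ p, ⁅Upos m u, M⁆ ∈ p)
    (hH : cartanH m ∈ p) (u : Fin m → ℝ) : Upos m u ∈ p := by
  simpa [lie_Upos_cartanH] using hstab u _ hH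

end Membership

end LorentzAlgebra

open LorentzAlgebra in
theorem subalgebra_meeting_hneg_is_full_general (m : ℕ)
    (h' : Submodule ℝ (Matrix (Idx m) (Idx m) ℝ))
    (hbr : ∀ M ∈ h', ∀ M' ∈ h', ⁅M, M'⁆ ∈ h')
    (hstab : ∀ u : Fin m → ℝ, ∀ M ∈ h', ⁅Upos m u, M⁆ ∈ h')
    (hmeet : ∃ v : Fin m → ℝ, v ≠ 0 ∧ Yneg m v ∈ h') :
    ∀ M : Matrix (Idx m) (Idx m) ℝ, Mᵀ * lorJ m + lorJ m * M = 0 → M ∈ h' := by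
  obtain ⟨v, hv0, hv⟩ := hmeet
  have hY := Yneg_mem_of_ne_zero hbr hstab hv0 hv
  have hH := cartanH_mem hstab hv0 hv
  intro M hM
  rw [eq_of_transpose_mul_lorJ_add hM]
  have hA := transpose_submatrix_inr_inl_of_transpose_mul_lorJ_add hM
  exact add_mem (add_mem (add_mem (h'.smul_mem _ hH) (midBlock_mem hstab hY hH hA))
    (Upos_mem hstab hH _)) (hY _)

/-- If `h'` is a Lie subalgebra of `o(1,k)` (`k = m+1 ≥ 2`) with `[h_α, h'] ⊆ h'` and
`h' ∩ h_{-α} ≠ 0`, then `h' = o(1,k)`. -/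
theorem subalgebra_meeting_hneg_is_full (m : ℕ) (hm : 1 ≤ m)
    (h' : Submodule ℝ (Matrix (Idx m) (Idx m) ℝ))
    (hsub : ∀ M ∈ h', Mᵀ * lorJ m + lorJ m * M = 0)
    (hbr : ∀ M ∈ h', ∀ M' ∈ h', ⁅M, M'⁆ ∈ h')
    (hstab : ∀ u : Fin m → ℝ, ∀ M ∈ h', ⁅Upos m u, M⁆ ∈ h')
    (hmeet : ∃ v : Fin m → ℝ, v ≠ 0 ∧ Yneg m v ∈ h') :
    ∀ M : Matrix (Idx m) (Idx m) ℝ, Mᵀ * lorJ m + lorJ m * M = 0 → M ∈ h' :=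
  subalgebra_meeting_hneg_is_full_general m h' hbr hstab hmeet
end
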